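/- Under Assumption 1, let ĥ₀ and h₀ be two initial type distributions in P(𝓜), with the same mutant distribution q, and let (ĥ_i)_{i≥0} and (h_i)_{i≥0} be the corresponding sequences. If (ĥ₀)_{[0,M)} ≺ (h₀)_{[0,M)} (hence ĥ₀({M}) ≥ h₀({M})), then for every i ≥ 1, (ĥ_i)_{[0,M)} ≺ (h_i)_{[0,M)} and ĥ_i({M}) ≥ h_i({M}). -/

import Mathlib

/-!
Assumption 1 turns the domination `(ĥ_i)_{[0,M)} ≺ (h_i)_{[0,M)}` into `s(·, ĥ_i) ≤ s(·, h_i)`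
on `[0,M]`, so on `[0,M)` the selected measure `s(·, ĥ_i) ĥ_i` is dominated by `s(·, h_i) h_i`;
adding the common mutation term `β q` keeps the domination, which therefore propagates by
induction. As every `h_i` is a probability measure on `[0,M]`, having more mass on `[0,M)`
means having less mass at `M`.
-/

open MeasureTheory Set Filter

/-- Selective advantage `s(x,u) = w(x,u) / ∫ w(y,u) u(dy)` if the mean fitness is
positive, and `1` otherwise. -/
noncomputable def sel (w : ℝ → MeasureTheory.Measure ℝ → ℝ)
    (u : MeasureTheory.Measure ℝ) (x : ℝ) : ℝ :=
  if 0 < ∫ y, w y u ∂u then w x u / ∫ y, w y u ∂u else 1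

/-- The sequence of type distributions:
`p_i(dx) = (1-β) s(x,p_{i-1}) p_{i-1}(dx) + β q(dx)`. -/
noncomputable def evol (w : ℝ → MeasureTheory.Measure ℝ → ℝ) (β : ℝ)
    (q p₀ : MeasureTheory.Measure ℝ) : ℕ → MeasureTheory.Measure ℝ
  | 0 => p₀
  | i + 1 =>
      ENNReal.ofReal (1 - β) •
          ((evol w β q p₀ i).withDensity fun x =>
            ENNReal.ofReal (sel w (evol w β q p₀ i) x))
        + ENNReal.ofReal β • q

/-- Convergence in total variation (uniform convergence over all measurable sets). -/
def TendstoTV (p : ℕ → MeasureTheory.Measure ℝ) (μ : MeasureTheory.Measure ℝ) : Prop :=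
  ∀ ε : ℝ, 0 < ε → ∃ N : ℕ, ∀ i ≥ N, ∀ A : Set ℝ, MeasurableSet A →
    |((p i) A).toReal - (μ A).toReal| < ε

/-- Weak convergence of measures (tested against bounded continuous functions). -/
def TendstoWeak (p : ℕ → MeasureTheory.Measure ℝ) (μ : MeasureTheory.Measure ℝ) : Prop :=
  ∀ f : BoundedContinuousFunction ℝ ℝ,
    Filter.Tendsto (fun i => ∫ x, f x ∂(p i)) Filter.atTop (nhds (∫ x, f x ∂μ))

/-- Assumption 1: if `v` restricted to `[0,M)` is a component of `u` restricted to `[0,M)`,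
then `s(·,u) ≥ s(·,v)` on `[0,M]`. -/
def Assumption1 (M : ℝ) (w : ℝ → MeasureTheory.Measure ℝ → ℝ) : Prop :=
  ∀ u v : MeasureTheory.Measure ℝ,
    IsProbabilityMeasure u → IsProbabilityMeasure v →
    u ((Set.Icc 0 M)ᶜ) = 0 → v ((Set.Icc 0 M)ᶜ) = 0 →
    v.restrict (Set.Ico 0 M) ≤ u.restrict (Set.Ico 0 M) →
    ∀ x ∈ Set.Icc (0:ℝ) M, sel w v x ≤ sel w u x

/-- Assumption 2: for every `0 ≤ a < M` and `0 < ε < 1` there is `c(a,ε) > 1` such that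
`s(M,u) ≥ c(a,ε) s(M,v)` whenever `v_{[0,M)} ≺ u_{[0,M)}` and `D_u(a) ≥ D_v(a) + ε`. -/
def Assumption2 (M : ℝ) (w : ℝ → MeasureTheory.Measure ℝ → ℝ) : Prop :=
  ∀ a : ℝ, 0 ≤ a → a < M → ∀ ε : ℝ, 0 < ε → ε < 1 → ∃ c : ℝ, 1 < c ∧
    ∀ u v : MeasureTheory.Measure ℝ,
      IsProbabilityMeasure u → IsProbabilityMeasure v →
      u ((Set.Icc 0 M)ᶜ) = 0 → v ((Set.Icc 0 M)ᶜ) = 0 →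
      v.restrict (Set.Ico 0 M) ≤ u.restrict (Set.Ico 0 M) →
      (v (Set.Icc 0 a)).toReal + ε ≤ (u (Set.Icc 0 a)).toReal →
      c * sel w v M ≤ sel w u M

namespace MeasureTheory.Measure

variable {α : Type*} [MeasurableSpace α]

theorem withDensity_mono_measure {μ ν : Measure α} (h : μ ≤ ν) (f : α → ENNReal) :
    μ.withDensity f ≤ ν.withDensity f :=
  Measure.le_iff.2 fun s hs => by
    rw [withDensity_apply _ hs, withDensity_apply _ hs]
    exact lintegral_mono' (Measure.restrict_mono subset_rfl h) le_rfl

theorem restrict_withDensity_le_restrict_withDensity {μ ν : Measure α} {f g : α → ENNReal}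
    {A : Set α} (hA : MeasurableSet A) (hμν : μ.restrict A ≤ ν.restrict A)
    (hfg : ∀ x ∈ A, f x ≤ g x) :
    (μ.withDensity f).restrict A ≤ (ν.withDensity g).restrict A := by
  rw [restrict_withDensity hA, restrict_withDensity hA]
  calc (μ.restrict A).withDensity f ≤ (μ.restrict A).withDensity g :=
        withDensity_mono (ae_restrict_of_forall_mem hA hfg)
    _ ≤ (ν.restrict A).withDensity g := withDensity_mono_measure hμν g

end MeasureTheory.Measure

theorem measure_singleton_le_of_restrict_Ico_le {a b : ℝ} {μ ν : Measure ℝ}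
    [IsProbabilityMeasure μ] [IsProbabilityMeasure ν] (hν : ν (Icc a b)ᶜ = 0)
    (h : ν.restrict (Ico a b) ≤ μ.restrict (Ico a b)) : μ {b} ≤ ν {b} := by
  have hIco : ν (Ico a b) ≤ μ (Ico a b) := by
    simpa only [Measure.restrict_apply_self] using Measure.le_iff'.1 h (Ico a b)
  have hcover : (Ico a b)ᶜ ⊆ {b} ∪ (Icc a b)ᶜ := by
    intro x hx
    by_cases hxb : x = b
    · exact Or.inl hxb
    · exact Or.inr fun hx' => hx ⟨hx'.1, lt_of_le_of_ne hx'.2 hxb⟩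
  calc μ {b} ≤ μ (Ico a b)ᶜ := measure_mono fun x hx => by simp_all
    _ = 1 - μ (Ico a b) := prob_compl_eq_one_sub measurableSet_Ico
    _ ≤ 1 - ν (Ico a b) := tsub_le_tsub_left hIco 1
    _ = ν (Ico a b)ᶜ := (prob_compl_eq_one_sub measurableSet_Ico).symm
    _ ≤ ν {b} + ν (Icc a b)ᶜ := (measure_mono hcover).trans (measure_union_le _ _)
    _ = ν {b} := by rw [hν, add_zero]

section Evol

variable {w : ℝ → Measure ℝ → ℝ} {β : ℝ} {q : Measure ℝ}

theorem lintegral_ofReal_sel {u : Measure ℝ} [IsProbabilityMeasure u]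
    (hw : ∀ x, 0 ≤ w x u) : ∫⁻ x, ENNReal.ofReal (sel w u x) ∂u = 1 := by
  unfold sel
  split_ifs with hpos
  · have hint : Integrable (fun y => w y u) u := Integrable.of_integral_ne_zero hpos.ne'
    rw [← ofReal_integral_eq_lintegral_ofReal (hint.div_const _)
      (ae_of_all _ fun x => div_nonneg (hw x) hpos.le), integral_div, div_self hpos.ne',
      ENNReal.ofReal_one]
  · simp

theorem evol_succ (p₀ : Measure ℝ) (i : ℕ) :
    evol w β q p₀ (i + 1) =
      ENNReal.ofReal (1 - β) •
          (evol w β q p₀ i).withDensity (fun x => ENNReal.ofReal (sel w (evol w β q p₀ i) x))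
        + ENNReal.ofReal β • q :=
  rfl

theorem isProbabilityMeasure_evol (hw : ∀ x u, 0 ≤ w x u) (hβ : β ∈ Ioo (0 : ℝ) 1)
    [IsProbabilityMeasure q] (p₀ : Measure ℝ) [IsProbabilityMeasure p₀] (i : ℕ) :
    IsProbabilityMeasure (evol w β q p₀ i) := by
  induction i with
  | zero => assumption
  | succ i ih =>
    constructor
    rw [evol_succ, Measure.add_apply, Measure.smul_apply, Measure.smul_apply,
      withDensity_apply _ MeasurableSet.univ, Measure.restrict_univ,
      lintegral_ofReal_sel fun x => hw x _, measure_univ, smul_eq_mul, smul_eq_mul, mul_one,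
      mul_one, ← ENNReal.ofReal_add (by linarith [hβ.2]) hβ.1.le, sub_add_cancel,
      ENNReal.ofReal_one]

theorem evol_apply_eq_zero {S : Set ℝ} (hq : q S = 0)
    {p₀ : Measure ℝ} (hp₀ : p₀ S = 0) (i : ℕ) : evol w β q p₀ i S = 0 := by
  induction i with
  | zero => exact hp₀
  | succ i ih =>
    rw [evol_succ, Measure.add_apply, Measure.smul_apply, Measure.smul_apply,
      withDensity_absolutelyContinuous _ _ ih, hq, smul_zero, smul_zero, add_zero]

theorem restrict_evol_succ_le {M : ℝ} (hA1 : Assumption1 M w) {u₀ v₀ : Measure ℝ} {i : ℕ}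
    [IsProbabilityMeasure (evol w β q u₀ i)] [IsProbabilityMeasure (evol w β q v₀ i)]
    (hu : evol w β q u₀ i (Icc 0 M)ᶜ = 0) (hv : evol w β q v₀ i (Icc 0 M)ᶜ = 0)
    (h : (evol w β q v₀ i).restrict (Ico 0 M) ≤ (evol w β q u₀ i).restrict (Ico 0 M)) :
    (evol w β q v₀ (i + 1)).restrict (Ico 0 M) ≤ (evol w β q u₀ (i + 1)).restrict (Ico 0 M) := by
  have hsel := hA1 _ _ inferInstance inferInstance hu hv h
  have hdens := Measure.restrict_withDensity_le_restrict_withDensity measurableSet_Ico h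
    fun x hx => ENNReal.ofReal_le_ofReal (hsel x (Ico_subset_Icc_self hx))
  simp only [evol_succ, Measure.restrict_add, Measure.restrict_smul]
  gcongr

end Evol

theorem stmt11_general (M : ℝ) (β : ℝ) (hβ : β ∈ Set.Ioo (0:ℝ) 1)
    (q : MeasureTheory.Measure ℝ) [IsProbabilityMeasure q] (hq : q ((Set.Icc 0 M)ᶜ) = 0)
    (w : ℝ → MeasureTheory.Measure ℝ → ℝ)
    (hw_nonneg : ∀ x u, 0 ≤ w x u)
    (hA1 : Assumption1 M w)
    (hhat₀ h₀ : MeasureTheory.Measure ℝ)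
    [IsProbabilityMeasure hhat₀] [IsProbabilityMeasure h₀]
    (hhat₀supp : hhat₀ ((Set.Icc 0 M)ᶜ) = 0) (h₀supp : h₀ ((Set.Icc 0 M)ᶜ) = 0)
    (hcomp : hhat₀.restrict (Set.Ico 0 M) ≤ h₀.restrict (Set.Ico 0 M)) :
    ∀ i : ℕ, 1 ≤ i →
      (evol w β q hhat₀ i).restrict (Set.Ico 0 M) ≤
        (evol w β q h₀ i).restrict (Set.Ico 0 M) ∧
      (evol w β q h₀ i) ({M} : Set ℝ) ≤ (evol w β q hhat₀ i) ({M} : Set ℝ) := by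
  have := isProbabilityMeasure_evol (q := q) hw_nonneg hβ h₀
  have := isProbabilityMeasure_evol (q := q) hw_nonneg hβ hhat₀
  have hsupp := evol_apply_eq_zero (β := β) (w := w) hq h₀supp
  have hsupp_hat := evol_apply_eq_zero (β := β) (w := w) hq hhat₀supp
  have hrestrict : ∀ i, (evol w β q hhat₀ i).restrict (Ico 0 M) ≤
      (evol w β q h₀ i).restrict (Ico 0 M) := by
    intro i
    induction i with
    | zero => exact hcomp
    | succ i ih => exact restrict_evol_succ_le hA1 (hsupp i) (hsupp_hat i) ih
  exact fun i _ => ⟨hrestrict i, measure_singleton_le_of_restrict_Ico_le (hsupp_hat i) (hrestrict i)⟩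

/-- Lemma 9 of the paper. Under Assumption 1, if
`(ĥ₀)_{[0,M)} ≺ (h₀)_{[0,M)}`, then for every `i ≥ 1`,
`(ĥ_i)_{[0,M)} ≺ (h_i)_{[0,M)}` and `ĥ_i({M}) ≥ h_i({M})`. -/
theorem stmt11 (M : ℝ) (hM : 0 < M) (β : ℝ) (hβ : β ∈ Set.Ioo (0:ℝ) 1)
    (q : MeasureTheory.Measure ℝ) [IsProbabilityMeasure q] (hq : q ((Set.Icc 0 M)ᶜ) = 0)
    (w : ℝ → MeasureTheory.Measure ℝ → ℝ)
    (hw_nonneg : ∀ x u, 0 ≤ w x u)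
    (hw_meas : ∀ u, Measurable fun x => w x u)
    (hA1 : Assumption1 M w)
    (hhat₀ h₀ : MeasureTheory.Measure ℝ)
    [IsProbabilityMeasure hhat₀] [IsProbabilityMeasure h₀]
    (hhat₀supp : hhat₀ ((Set.Icc 0 M)ᶜ) = 0) (h₀supp : h₀ ((Set.Icc 0 M)ᶜ) = 0)
    (hcomp : hhat₀.restrict (Set.Ico 0 M) ≤ h₀.restrict (Set.Ico 0 M)) :
    ∀ i : ℕ, 1 ≤ i →
      (evol w β q hhat₀ i).restrict (Set.Ico 0 M) ≤
        (evol w β q h₀ i).restrict (Set.Ico 0 M) ∧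
      (evol w β q h₀ i) ({M} : Set ℝ) ≤ (evol w β q hhat₀ i) ({M} : Set ℝ) :=
  stmt11_general M β hβ q hq w hw_nonneg hA1 hhat₀ h₀ hhat₀supp h₀supp hcomp
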